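/- Let t > 0, y > t and F(x) = |x| + (x − y)²/(2t). Then for all real numbers a ≤ b, the ratio (∫_{(y−t)+√T·a}^{(y−t)+√T·b} exp(−F(x)/T) dx) / (∫_ℝ exp(−F(x)/T) dx) converges, as T → 0⁺, to ∫_a^b (1/√(2πt)) · exp(−x²/(2t)) dx. In other words, (X_T(y,t) − (y − t))/√T converges in distribution to a centered Gaussian N(0,t) with variance t. -/

import Mathlib

open Filter MeasureTheory

/-- The one-dimensional objective `F(x) = |x| + (x − y)²/(2t)`. -/
noncomputable def obj1 (y t x : ℝ) : ℝ := |x| + (x - y) ^ 2 / (2 * t)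

/-!
Completing the square, `F(x) = m + (x − s)²/(2t) + (|x| − x)` with `s = y − t` and
`m = y − t/2`, and the last term vanishes for `x ≥ 0`. Substituting `x = s + √T u` and
factoring out `√T e^{-m/T}` from numerator and denominator, the Gibbs density becomes
`exp(-u²/(2t) - (|x| - x)/T)`: it is dominated by the Gaussian `exp(-u²/(2t))` and, since
`s > 0`, agrees with it for small `T` at every fixed `u`. Dominated convergence then gives
the limits of both rescaled integrals.
-/

open Real Topology

lemma integrable_exp_neg_sq_div {t : ℝ} (ht : 0 < t) :
    Integrable fun u : ℝ => exp (-u ^ 2 / (2 * t)) := by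
  convert integrable_exp_neg_mul_sq (inv_pos.2 (mul_pos two_pos ht)) using 3
  rw [neg_div, div_eq_inv_mul, neg_mul]

lemma integral_exp_neg_sq_div (t : ℝ) :
    ∫ u : ℝ, exp (-u ^ 2 / (2 * t)) = √(2 * π * t) := by
  convert integral_gaussian (2 * t)⁻¹ using 4
  · rw [neg_div, div_eq_inv_mul, neg_mul]
  · rw [div_inv_eq_mul]
    ring

section

variable {y t : ℝ}

lemma obj1_eq (ht : t ≠ 0) (x : ℝ) :
    obj1 y t x = (y - t / 2) + (x - (y - t)) ^ 2 / (2 * t) + (|x| - x) := by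
  unfold obj1
  field_simp
  ring

/-- `exp(-F(x)/T)` at `x = (y - t) + √T u`, renormalized by `exp(m/T)` where
`m = y - t/2 = min F`. -/
noncomputable def rescaledGibbs (y t T u : ℝ) : ℝ :=
  exp (-(obj1 y t (y - t + √T * u) - (y - t / 2)) / T)

lemma exp_neg_obj1_div (T u : ℝ) :
    exp (-obj1 y t (y - t + √T * u) / T) = exp (-(y - t / 2) / T) * rescaledGibbs y t T u := by
  rw [rescaledGibbs, ← exp_add]
  congr 1
  ring

lemma rescaledGibbs_eq (ht : t ≠ 0) {T : ℝ} (hT : 0 < T) (u : ℝ) :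
    rescaledGibbs y t T u =
      exp (-u ^ 2 / (2 * t) - (|y - t + √T * u| - (y - t + √T * u)) / T) := by
  rw [rescaledGibbs, obj1_eq ht]
  congr 1
  rw [add_sub_cancel_left, mul_pow, sq_sqrt hT.le]
  field_simp
  ring

lemma rescaledGibbs_le (ht : t ≠ 0) {T : ℝ} (hT : 0 < T) (u : ℝ) :
    rescaledGibbs y t T u ≤ exp (-u ^ 2 / (2 * t)) := by
  rw [rescaledGibbs_eq ht hT]
  gcongr
  have := le_abs_self (y - t + √T * u)
  linarith [div_nonneg (sub_nonneg.2 this) hT.le]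

lemma rescaledGibbs_eventually_eq (ht : t ≠ 0) (hyt : t < y) (u : ℝ) :
    ∀ᶠ T in 𝓝[>] 0, rescaledGibbs y t T u = exp (-u ^ 2 / (2 * t)) := by
  have hlim : Tendsto (fun T => y - t + √T * u) (𝓝[>] 0) (𝓝 (y - t)) := by
    have := ((continuous_sqrt.tendsto 0).mono_left
      (nhdsWithin_le_nhds (s := Set.Ioi 0))).const_mul u
    simpa [mul_comm] using this.const_add (y - t)
  filter_upwards [self_mem_nhdsWithin, hlim.eventually (lt_mem_nhds (sub_pos.2 hyt))]
    with T hT hpos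
  rw [rescaledGibbs_eq ht hT, abs_of_pos hpos]
  simp

theorem tendsto_integral_rescaledGibbs (ht : t ≠ 0) (hyt : t < y) {μ : Measure ℝ}
    (hint : Integrable (fun u => exp (-u ^ 2 / (2 * t))) μ) :
    Tendsto (fun T => ∫ u, rescaledGibbs y t T u ∂μ) (𝓝[>] 0)
      (𝓝 (∫ u, exp (-u ^ 2 / (2 * t)) ∂μ)) := by
  refine tendsto_integral_filter_of_dominated_convergence _ ?_ ?_ hint ?_
  · refine Eventually.of_forall fun T => Continuous.aestronglyMeasurable ?_
    unfold rescaledGibbs obj1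
    fun_prop
  · filter_upwards [self_mem_nhdsWithin] with T hT
    refine Eventually.of_forall fun u => ?_
    exact (norm_of_nonneg (exp_nonneg _)).trans_le (rescaledGibbs_le ht hT u)
  · exact Eventually.of_forall fun u =>
      tendsto_nhds_of_eventually_eq (rescaledGibbs_eventually_eq ht hyt u)

lemma integral_exp_neg_obj1_div_interval (T a b : ℝ) :
    ∫ x in (y - t + √T * a)..(y - t + √T * b), exp (-obj1 y t x / T) =
      √T * exp (-(y - t / 2) / T) * ∫ u in a..b, rescaledGibbs y t T u := by
  rw [← intervalIntegral.smul_integral_comp_add_mul, smul_eq_mul]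
  simp_rw [exp_neg_obj1_div, intervalIntegral.integral_const_mul, mul_assoc]

lemma integral_exp_neg_obj1_div {T : ℝ} (hT : 0 < T) :
    ∫ x, exp (-obj1 y t x / T) =
      √T * exp (-(y - t / 2) / T) * ∫ u, rescaledGibbs y t T u := by
  have hsqrt : 0 < √T := sqrt_pos.2 hT
  have hsubst := Measure.integral_comp_mul_left (fun x => exp (-obj1 y t (y - t + x) / T)) √T
  rw [integral_add_left_eq_self (fun x => exp (-obj1 y t x / T)), smul_eq_mul,
    abs_of_pos (inv_pos.2 hsqrt)] at hsubst
  simp_rw [exp_neg_obj1_div, integral_const_mul] at hsubst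
  rw [mul_assoc, hsubst, mul_inv_cancel_left₀ hsqrt.ne']

end

theorem stmt12_general (t y : ℝ) (ht : 0 < t) (hyt : t < y) (a b : ℝ) :
    Tendsto
      (fun T : ℝ =>
        (∫ x in ((y - t) + Real.sqrt T * a)..((y - t) + Real.sqrt T * b),
            Real.exp (-(obj1 y t x) / T)) /
          ∫ x : ℝ, Real.exp (-(obj1 y t x) / T))
      (nhdsWithin 0 (Set.Ioi 0))
      (nhds (∫ x in a..b, 1 / Real.sqrt (2 * Real.pi * t) * Real.exp (-x ^ 2 / (2 * t)))) := by
  have hgauss := integrable_exp_neg_sq_div ht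
  have hnum : Tendsto (fun T => ∫ u in a..b, rescaledGibbs y t T u) (𝓝[>] 0)
      (𝓝 (∫ u in a..b, exp (-u ^ 2 / (2 * t)))) :=
    (tendsto_integral_rescaledGibbs ht.ne' hyt hgauss.integrableOn).sub
      (tendsto_integral_rescaledGibbs ht.ne' hyt hgauss.integrableOn)
  have hden := tendsto_integral_rescaledGibbs ht.ne' hyt hgauss
  rw [integral_exp_neg_sq_div] at hden
  rw [intervalIntegral.integral_const_mul, one_div_mul_eq_div]
  refine (hnum.div hden (by positivity)).congr' ?_
  filter_upwards [self_mem_nhdsWithin] with T hT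
  rw [Pi.div_apply, integral_exp_neg_obj1_div_interval, integral_exp_neg_obj1_div hT,
    mul_div_mul_left _ _ (mul_pos (sqrt_pos.2 hT) (exp_pos _)).ne']

/-- For `y > t`, `(X_T − (y − t))/√T` converges in distribution to the centered
Gaussian `N(0,t)` with variance `t`. -/
theorem stmt12 (t y : ℝ) (ht : 0 < t) (hyt : t < y) (a b : ℝ) (hab : a ≤ b) :
    Tendsto
      (fun T : ℝ =>
        (∫ x in ((y - t) + Real.sqrt T * a)..((y - t) + Real.sqrt T * b),
            Real.exp (-(obj1 y t x) / T)) /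
          ∫ x : ℝ, Real.exp (-(obj1 y t x) / T))
      (nhdsWithin 0 (Set.Ioi 0))
      (nhds (∫ x in a..b, 1 / Real.sqrt (2 * Real.pi * t) * Real.exp (-x ^ 2 / (2 * t)))) :=
  stmt12_general t y ht hyt a b
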